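/- Let T be a spanning tree of graph G rooted at r with every edge directed toward the root (each non-root vertex has a directed path to r). Let u be a non-root vertex with parent u', and let e = {v,w} be an edge of G not in T such that v is a descendant of u in T and w is not. Let T' be obtained from T by removing edge (u,u'), adding edge (v,w) directed from v to w, and reversing the orientation of every edge on the directed path from v to u in T. Then T' is a spanning tree in which every vertex has a directed path to r. -/

import Mathlib

/-!
A map `q : V → V` fixing `r`, under which every vertex eventually reaches `r`, has no periodic
points other than `r`. Hence `x ↦ s(x, q x)` is injective on `V \ {r}`, so the graph of these edges
is connected with `|V| - 1` edges, i.e. a tree. The rerouted map `p'` again reaches `r` from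
everywhere: vertices on the reversed path walk back to `v`, then to `w`, whose `p`-orbit avoids the
path. Every new edge is an old edge other than `s(u, p u)`, or `s(v, w)`; as both edge sets have
`|V| - 1` elements, this inclusion is an equality.
-/

open SimpleGraph Function

section ParentMap

variable {V : Type*} {r : V} {q : V → V}

theorem eq_root_of_iterate_eq_self (hr : q r = r) (hreach : ∀ x, ∃ m, q^[m] x = r)
    {x : V} {k : ℕ} (hk : 0 < k) (hx : q^[k] x = x) : x = r := by
  obtain ⟨m, hm⟩ := hreach x
  have hper : IsPeriodicPt q (k * m) x := IsPeriodicPt.mul_const hx m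
  calc x = q^[k * m - m + m] x := by
        rw [Nat.sub_add_cancel (Nat.le_mul_of_pos_left m hk)]; exact hper.symm
    _ = r := by rw [iterate_add_apply, hm, iterate_fixed hr]

theorem apply_ne_self_of_ne_root (hr : q r = r) (hreach : ∀ x, ∃ m, q^[m] x = r)
    {x : V} (hx : x ≠ r) : q x ≠ x :=
  fun h => hx (eq_root_of_iterate_eq_self hr hreach one_pos h)

theorem iterate_ne_root_of_le (hr : q r = r) {x : V} {j k : ℕ} (hk : q^[k] x ≠ r)
    (hj : j ≤ k) : q^[j] x ≠ r := by
  intro hjr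
  apply hk
  rw [← Nat.sub_add_cancel hj, iterate_add_apply, hjr, iterate_fixed hr]

theorem injOn_iterate_Iic (hr : q r = r) (hreach : ∀ x, ∃ m, q^[m] x = r) {x : V} {k : ℕ}
    (hk : q^[k] x ≠ r) : Set.InjOn (fun j => q^[j] x) (Set.Iic k) := by
  have key : ∀ i j, i < j → j ≤ k → q^[i] x ≠ q^[j] x := by
    intro i j hij hjk heq
    refine iterate_ne_root_of_le hr hk (hij.le.trans hjk)
      (eq_root_of_iterate_eq_self hr hreach (Nat.sub_pos_of_lt hij) ?_)
    rw [← iterate_add_apply, Nat.sub_add_cancel hij.le, heq]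
  intro i hi j hj heq
  by_contra hne
  rcases Nat.lt_or_gt_of_ne hne with h | h
  · exact key i j h hj heq
  · exact key j i h hi heq.symm

theorem iterate_ne_iterate_of_not_exists {u v w : V} {n : ℕ} (hdesc : q^[n] v = u)
    (hnot : ¬ ∃ m, q^[m] w = u) {j : ℕ} (hj : j ≤ n) (m : ℕ) : q^[j] v ≠ q^[m] w := by
  intro heq
  refine hnot ⟨n - j + m, ?_⟩
  rw [iterate_add_apply, ← heq, ← iterate_add_apply, Nat.sub_add_cancel hj, hdesc]

theorem injOn_parentEdge (hr : q r = r) (hreach : ∀ x, ∃ m, q^[m] x = r) :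
    Set.InjOn (fun x => s(x, q x)) {x | x ≠ r} := by
  intro x hx y _ hxy
  rcases Sym2.eq_iff.1 hxy with ⟨h, _⟩ | ⟨h₁, h₂⟩
  · exact h
  · refine absurd (eq_root_of_iterate_eq_self hr hreach two_pos ?_) hx
    show q (q x) = x
    rw [h₂, ← h₁]

variable (r q) in
def parentEdges : Set (Sym2 V) := {e | ∃ x, x ≠ r ∧ e = s(x, q x)}

variable (r q) in
abbrev parentGraph : SimpleGraph V := fromEdgeSet (parentEdges r q)

theorem parentEdges_eq_image : parentEdges r q = (fun x => s(x, q x)) '' {x | x ≠ r} := by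
  ext e
  simp only [parentEdges, Set.mem_ofPred_eq, Set.mem_image, eq_comm]

theorem ncard_parentEdges_add_one [Finite V] (hr : q r = r) (hreach : ∀ x, ∃ m, q^[m] x = r) :
    (parentEdges r q).ncard + 1 = Nat.card V := by
  rw [parentEdges_eq_image, (injOn_parentEdge hr hreach).ncard_image, ← Set.ncard_univ,
    ← Set.ncard_sdiff_singleton_add_one (Set.mem_univ r)]
  congr 2
  ext
  simp

theorem edgeSet_parentGraph (hr : q r = r) (hreach : ∀ x, ∃ m, q^[m] x = r) :
    (parentGraph r q).edgeSet = parentEdges r q := by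
  refine (edgeSet_fromEdgeSet _).trans (sdiff_eq_left.2 (Set.disjoint_left.2 ?_))
  rintro _ ⟨x, hx, rfl⟩
  simpa using (apply_ne_self_of_ne_root hr hreach hx).symm

theorem parentGraph_reachable_root (hr : q r = r) (hreach : ∀ x, ∃ m, q^[m] x = r) (x : V) :
    (parentGraph r q).Reachable x r := by
  obtain ⟨m, hm⟩ := hreach x
  induction m generalizing x with
  | zero => exact hm ▸ Reachable.refl x
  | succ m ih =>
    by_cases hx : x = r
    · exact hx ▸ Reachable.refl x
    · have hadj : (parentGraph r q).Adj x (q x) := by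
        rw [fromEdgeSet_adj]
        exact ⟨⟨x, hx, rfl⟩, (apply_ne_self_of_ne_root hr hreach hx).symm⟩
      exact hadj.reachable.trans (ih (q x) (by rwa [← iterate_succ_apply]))

theorem isTree_parentGraph [Finite V] (hr : q r = r) (hreach : ∀ x, ∃ m, q^[m] x = r) :
    (parentGraph r q).IsTree := by
  have hconn : (parentGraph r q).Connected := (connected_iff _).2
    ⟨fun a b => (parentGraph_reachable_root hr hreach a).trans
      (parentGraph_reachable_root hr hreach b).symm, ⟨r⟩⟩
  rw [isTree_iff_connected_and_card, edgeSet_parentGraph hr hreach, Nat.card_coe_set_eq]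
  exact ⟨hconn, ncard_parentEdges_add_one hr hreach⟩

end ParentMap

section Rerouting

variable {V : Type*}

structure IsRerouting (p : V → V) (v w : V) (n : ℕ) (p' : V → V) : Prop where
  apply_start : p' v = w
  apply_iterate_succ : ∀ j < n, p' (p^[j + 1] v) = p^[j] v
  apply_of_not_mem_path : ∀ x, (¬ ∃ j ≤ n, p^[j] v = x) → p' x = p x

namespace IsRerouting

variable {p p' : V → V} {r u v w : V} {n : ℕ}

theorem iterate_apply_path (h : IsRerouting p v w n p') {j : ℕ} (hj : j ≤ n) :
    p'^[j] (p^[j] v) = v := by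
  induction j with
  | zero => rfl
  | succ j ih => rw [iterate_succ_apply, h.apply_iterate_succ j hj, ih (Nat.le_of_succ_le hj)]

theorem iterate_apply_of_forall_ne (h : IsRerouting p v w n p')
    (hw : ∀ m, ∀ j ≤ n, p^[j] v ≠ p^[m] w) (m : ℕ) : p'^[m] w = p^[m] w := by
  induction m with
  | zero => rfl
  | succ m ih =>
    rw [iterate_succ_apply', iterate_succ_apply', ih,
      h.apply_of_not_mem_path _ fun ⟨j, hj, heq⟩ => hw m j hj heq]

theorem apply_root (h : IsRerouting p v w n p') (hr : p r = r)
    (hpath : ∀ j ≤ n, p^[j] v ≠ r) : p' r = r := by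
  rw [h.apply_of_not_mem_path r fun ⟨j, hj, heq⟩ => hpath j hj heq, hr]

theorem reaches_root (h : IsRerouting p v w n p') (hreach : ∀ x, ∃ m, p^[m] x = r)
    (hw : ∃ m, p'^[m] w = r) (x : V) : ∃ m, p'^[m] x = r := by
  obtain ⟨m, hm⟩ := hreach x
  induction m generalizing x with
  | zero => exact ⟨0, hm⟩
  | succ m ih =>
    by_cases hpath : ∃ j ≤ n, p^[j] v = x
    · obtain ⟨j, hj, rfl⟩ := hpath
      obtain ⟨k, hk⟩ := hw
      exact ⟨k + 1 + j, by rw [iterate_add_apply, h.iterate_apply_path hj, iterate_succ_apply,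
        h.apply_start, hk]⟩
    · obtain ⟨k, hk⟩ := ih (p x) (by rwa [← iterate_succ_apply])
      exact ⟨k + 1, by rw [iterate_succ_apply, h.apply_of_not_mem_path x hpath, hk]⟩

theorem parentEdges_subset (h : IsRerouting p v w n p') (hr : p r = r)
    (hreach : ∀ x, ∃ m, p^[m] x = r) (hur : u ≠ r) (hdesc : p^[n] v = u) :
    parentEdges r p' ⊆ (parentEdges r p \ {s(u, p u)}) ∪ {s(v, w)} := by
  have hpath : ∀ j ≤ n, p^[j] v ≠ r := fun _ hj => iterate_ne_root_of_le hr (hdesc ▸ hur) hj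
  have hedge : ∀ {x}, x ≠ r → x ≠ u → s(x, p x) ≠ s(u, p u) := fun hx hxu =>
    ((injOn_parentEdge hr hreach).ne_iff hx hur).2 hxu
  rintro _ ⟨x, hx, rfl⟩
  by_cases hx_path : ∃ j ≤ n, p^[j] v = x
  · obtain ⟨j, hj, rfl⟩ := hx_path
    cases j with
    | zero => exact Or.inr (by rw [iterate_zero_apply, h.apply_start]; rfl)
    | succ j =>
      have hreversed : s(p^[j + 1] v, p' (p^[j + 1] v)) = s(p^[j] v, p (p^[j] v)) := by
        rw [h.apply_iterate_succ j hj, iterate_succ_apply', Sym2.eq_swap]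
      rw [hreversed]
      refine Or.inl ⟨⟨p^[j] v, hpath j (j.le_succ.trans hj), rfl⟩, ?_⟩
      refine hedge (hpath j (j.le_succ.trans hj)) fun hju => ?_
      have := injOn_iterate_Iic hr hreach (hdesc ▸ hur) (Set.mem_Iic.2 (j.le_succ.trans hj))
        (Set.mem_Iic.2 le_rfl) (hju.trans hdesc.symm)
      omega
  · rw [h.apply_of_not_mem_path x hx_path]
    refine Or.inl ⟨⟨x, hx, rfl⟩, hedge hx fun hxu => ?_⟩
    exact hx_path ⟨n, le_rfl, hdesc.trans hxu.symm⟩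

theorem parentEdges_eq [Finite V] (h : IsRerouting p v w n p') (hr : p r = r)
    (hreach : ∀ x, ∃ m, p^[m] x = r) (hr' : p' r = r) (hreach' : ∀ x, ∃ m, p'^[m] x = r)
    (hur : u ≠ r) (hdesc : p^[n] v = u) :
    parentEdges r p' = (parentEdges r p \ {s(u, p u)}) ∪ {s(v, w)} := by
  refine Set.eq_of_subset_of_ncard_le (h.parentEdges_subset hr hreach hur hdesc) ?_
  have hold := ncard_parentEdges_add_one hr hreach
  have hnew := ncard_parentEdges_add_one hr' hreach'
  have hdel := Set.ncard_sdiff_singleton_add_one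
    (show s(u, p u) ∈ parentEdges r p from ⟨u, hur, rfl⟩)
  calc _ ≤ (parentEdges r p \ {s(u, p u)}).ncard + ({s(v, w)} : Set (Sym2 V)).ncard :=
        Set.ncard_union_le _ _
    _ = (parentEdges r p').ncard := by rw [Set.ncard_singleton]; omega

end IsRerouting

end Rerouting

theorem stmt_11_general {V : Type*} [Fintype V] (r : V)
    (p : V → V) (hpr : p r = r)
    (hreach : ∀ x, ∃ m, p^[m] x = r)
    (u v w : V) (hur : u ≠ r)
    (n : ℕ) (hdesc : p^[n] v = u)
    (hnotdesc : ¬ ∃ m, p^[m] w = u)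
    (p' : V → V)
    (h'v : p' v = w)
    (h'rev : ∀ j, j < n → p' (p^[j + 1] v) = p^[j] v)
    (h'off : ∀ x, (¬ ∃ j ≤ n, p^[j] v = x) → p' x = p x) :
    (∀ x, ∃ m, p'^[m] x = r) ∧
      (SimpleGraph.fromEdgeSet {e | ∃ x, x ≠ r ∧ e = s(x, p' x)}).Connected ∧
      (SimpleGraph.fromEdgeSet {e | ∃ x, x ≠ r ∧ e = s(x, p' x)}).IsAcyclic ∧
      {e : Sym2 V | ∃ x, x ≠ r ∧ e = s(x, p' x)} =
        ({e : Sym2 V | ∃ x, x ≠ r ∧ e = s(x, p x)} \ {s(u, p u)}) ∪ {s(v, w)} := by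
  have h : IsRerouting p v w n p' := ⟨h'v, h'rev, h'off⟩
  have hpath : ∀ j ≤ n, p^[j] v ≠ r := fun _ hj =>
    iterate_ne_root_of_le hpr (hdesc ▸ hur) hj
  have hw : ∃ m, p'^[m] w = r := by
    obtain ⟨m, hm⟩ := hreach w
    exact ⟨m, (h.iterate_apply_of_forall_ne
      (fun m j hj => iterate_ne_iterate_of_not_exists hdesc hnotdesc hj m) m).trans hm⟩
  have hreach' := h.reaches_root hreach hw
  have hr' := h.apply_root hpr hpath
  have htree := isTree_parentGraph hr' hreach'
  exact ⟨hreach', htree.connected, htree.isAcyclic,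
    h.parentEdges_eq hpr hreach hr' hreach' hur hdesc⟩

/-- A spanning tree oriented towards the root `r` is encoded by a parent map
`p : V → V` (with `p r = r`); its edges are `{x, p x}` for `x ≠ r`.
If `{v, w}` is a non-tree edge of `G` with `v` a descendant of `u ≠ r` and `w`
not a descendant of `u`, and `p'` is the parent map obtained by removing the
edge `(u, p u)`, adding the edge `(v, w)` directed from `v` to `w`, and
reversing the orientation of the directed path from `v` to `u`, then the new
graph is again a spanning tree in which every vertex has a directed path to
the root `r`. -/
theorem stmt_11 {V : Type*} [Fintype V] (G : SimpleGraph V) (r : V)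
    (p : V → V) (hpr : p r = r)
    (hadj : ∀ x, x ≠ r → G.Adj x (p x))
    (hreach : ∀ x, ∃ m, p^[m] x = r)
    (htree : (SimpleGraph.fromEdgeSet {e | ∃ x, x ≠ r ∧ e = s(x, p x)}).Connected ∧
      (SimpleGraph.fromEdgeSet {e | ∃ x, x ≠ r ∧ e = s(x, p x)}).IsAcyclic)
    (u v w : V) (hur : u ≠ r)
    (hvw : G.Adj v w)
    (hnotT : s(v, w) ∉ {e : Sym2 V | ∃ x, x ≠ r ∧ e = s(x, p x)})
    (n : ℕ) (hdesc : p^[n] v = u)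
    (hnotdesc : ¬ ∃ m, p^[m] w = u)
    (p' : V → V)
    (h'v : p' v = w)
    (h'rev : ∀ j, j < n → p' (p^[j + 1] v) = p^[j] v)
    (h'off : ∀ x, (¬ ∃ j ≤ n, p^[j] v = x) → p' x = p x) :
    (∀ x, ∃ m, p'^[m] x = r) ∧
      (SimpleGraph.fromEdgeSet {e | ∃ x, x ≠ r ∧ e = s(x, p' x)}).Connected ∧
      (SimpleGraph.fromEdgeSet {e | ∃ x, x ≠ r ∧ e = s(x, p' x)}).IsAcyclic ∧
      {e : Sym2 V | ∃ x, x ≠ r ∧ e = s(x, p' x)} =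
        ({e : Sym2 V | ∃ x, x ≠ r ∧ e = s(x, p x)} \ {s(u, p u)}) ∪ {s(v, w)} :=
  stmt_11_general r p hpr hreach u v w hur n hdesc hnotdesc p' h'v h'rev h'off
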